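/- arXiv:1503.03453 — 3 statements merged into one kernel-verified Lean document; each statement's English description precedes it below -/
import Mathlib

section
/- Let X₁, ..., Xₙ (n ≥ 2) be i.i.d. lognormal with parameters μ and σ². Define Kₙ = (Aₙ/Hₙ) - 1 where Aₙ = (1/n)∑ᵢ Xᵢ and Hₙ = n/∑ᵢ(1/Xᵢ). Then E[Kₙ] = ((n-1)/n)·(exp(σ²) - 1). -/
open MeasureTheory ProbabilityTheory Real NNReal Finset

/-!
Expanding the product of the two sums, `Aₙ / Hₙ = n⁻² ∑ᵢ ∑ⱼ exp (Yᵢ - Yⱼ)`. The `n` diagonal terms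
equal `1`; for `i ≠ j`, independence makes `Yᵢ - Yⱼ` Gaussian with mean `0` and variance `2σ²`,
so `E[exp (Yᵢ - Yⱼ)] = exp σ²` is the value at `1` of its moment generating function.
-/

namespace ProbabilityTheory

variable {Ω : Type*} {mΩ : MeasurableSpace Ω} {P : Measure Ω}

lemma gaussianReal_sub_gaussianReal_of_indepFun {μ₁ μ₂ : ℝ} {v₁ v₂ : ℝ≥0} {X Y : Ω → ℝ}
    (hXY : IndepFun X Y P) (hX : P.map X = gaussianReal μ₁ v₁)
    (hY : P.map Y = gaussianReal μ₂ v₂) :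
    P.map (X - Y) = gaussianReal (μ₁ - μ₂) (v₁ + v₂) := by
  have hY_law : HasLaw Y (gaussianReal μ₂ v₂) P :=
    ⟨.of_map_ne_zero (by simp [hY, NeZero.ne]), hY⟩
  rw [sub_eq_add_neg, sub_eq_add_neg]
  exact gaussianReal_add_gaussianReal_of_indepFun (hXY.comp measurable_id measurable_neg) hX
    (gaussianReal_neg hY_law).map_eq

lemma integrable_exp_of_map_eq_gaussianReal {μ : ℝ} {v : ℝ≥0} {X : Ω → ℝ}
    (hX : P.map X = gaussianReal μ v) : Integrable (fun ω ↦ rexp (X ω)) P := by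
  have hX_meas : AEMeasurable X P := .of_map_ne_zero (by simp [hX, NeZero.ne])
  have h := integrable_exp_mul_gaussianReal (μ := μ) (v := v) 1
  rw [← hX, integrable_map_measure (by fun_prop) hX_meas] at h
  simpa [Function.comp_def] using h

lemma integral_exp_of_map_eq_gaussianReal {μ : ℝ} {v : ℝ≥0} {X : Ω → ℝ}
    (hX : P.map X = gaussianReal μ v) : ∫ ω, rexp (X ω) ∂P = rexp (μ + v / 2) := by
  simpa [mgf] using mgf_gaussianReal hX 1

lemma integrable_exp_sub_of_iIndepFun {ι : Type*} [IsFiniteMeasure P] {μ : ℝ} {v : ℝ≥0}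
    {Y : ι → Ω → ℝ} (hdist : ∀ i, P.map (Y i) = gaussianReal μ v) (hind : iIndepFun Y P)
    (i j : ι) : Integrable (fun ω ↦ rexp (Y i ω - Y j ω)) P := by
  by_cases hij : i = j
  · simp [hij]
  · exact integrable_exp_of_map_eq_gaussianReal
      (gaussianReal_sub_gaussianReal_of_indepFun (hind.indepFun hij) (hdist i) (hdist j))

lemma integral_exp_sub_of_iIndepFun {ι : Type*} [DecidableEq ι] [IsProbabilityMeasure P]
    {μ : ℝ} {v : ℝ≥0} {Y : ι → Ω → ℝ} (hdist : ∀ i, P.map (Y i) = gaussianReal μ v)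
    (hind : iIndepFun Y P) (i j : ι) :
    ∫ ω, rexp (Y i ω - Y j ω) ∂P = if i = j then 1 else rexp v := by
  by_cases hij : i = j
  · simp [hij]
  · rw [if_neg hij]
    simpa using integral_exp_of_map_eq_gaussianReal
      (gaussianReal_sub_gaussianReal_of_indepFun (hind.indepFun hij) (hdist i) (hdist j))

end ProbabilityTheory

lemma sum_div_div_div_sum_inv {ι K : Type*} [Field K] (s : Finset ι) (x : ι → K) (c : K) :
    (∑ i ∈ s, x i) / c / (c / ∑ i ∈ s, (x i)⁻¹) = (∑ i ∈ s, ∑ j ∈ s, x i / x j) / c ^ 2 := by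
  simp only [div_eq_mul_inv, mul_inv, inv_inv, ← sum_mul_sum]
  ring

lemma sum_sum_ite_eq_one {ι : Type*} [DecidableEq ι] {R : Type*} [CommRing R] (s : Finset ι)
    (c : R) : ∑ i ∈ s, ∑ j ∈ s, (if i = j then 1 else c) = #s * (1 - c) + #s ^ 2 * c := by
  have h (i j : ι) : (if i = j then 1 else c) = c + if i = j then 1 - c else 0 := by
    split_ifs <;> ring
  simp only [h, sum_add_distrib, sum_ite_eq, sum_const, nsmul_eq_mul, sum_ite_mem, inter_self]
  ring

theorem lognormal_Kn_mean_general {Ω : Type*} [MeasureSpace Ω]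
    [IsProbabilityMeasure (ℙ : Measure Ω)]
    (n : ℕ) (hn : 2 ≤ n) (μ : ℝ) (v : ℝ≥0)
    (Y : Fin n → Ω → ℝ)
    (hdist : ∀ i, Measure.map (Y i) ℙ = gaussianReal μ v)
    (hind : iIndepFun Y ℙ) :
    ∫ ω, ((∑ i, Real.exp (Y i ω)) / n) / ((n : ℝ) / ∑ i, (Real.exp (Y i ω))⁻¹) - 1 ∂ℙ =
      ((n : ℝ) - 1) / n * (Real.exp (v : ℝ) - 1) := by
  have hn0 : (n : ℝ) ≠ 0 := by norm_cast; omega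
  have hK (ω : Ω) : (∑ i, rexp (Y i ω)) / n / (n / ∑ i, (rexp (Y i ω))⁻¹)
      = (∑ i, ∑ j, rexp (Y i ω - Y j ω)) / n ^ 2 := by
    simp_rw [sum_div_div_div_sum_inv, exp_sub]
  have hint := integrable_exp_sub_of_iIndepFun hdist hind
  simp_rw [hK]
  rw [integral_sub ((integrable_finsetSum _ fun i _ ↦ integrable_finsetSum _ fun j _ ↦
      hint i j).div_const _) (integrable_const 1), integral_div,
    integral_finsetSum _ fun i _ ↦ integrable_finsetSum _ fun j _ ↦ hint i j]
  simp_rw [integral_finsetSum _ fun j _ ↦ hint _ j, integral_exp_sub_of_iIndepFun hdist hind,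
    sum_sum_ite_eq_one]
  simp only [card_univ, Fintype.card_fin, integral_const, probReal_univ, smul_eq_mul, mul_one]
  field_simp
  ring

/-- Let `X i = exp (Y i)`, `i = 1, ..., n`, `n ≥ 2`, be i.i.d. lognormal with
parameters `μ, σ²`. With `Aₙ` the sample arithmetic mean and `Hₙ` the sample
harmonic mean, the sample relative ratio `Kₙ = Aₙ/Hₙ - 1` satisfies
`E[Kₙ] = ((n-1)/n)·(exp σ² - 1)`. -/
theorem lognormal_Kn_mean {Ω : Type*} [MeasureSpace Ω]
    [IsProbabilityMeasure (ℙ : Measure Ω)]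
    (n : ℕ) (hn : 2 ≤ n) (μ : ℝ) (v : ℝ≥0) (hv : v ≠ 0)
    (Y : Fin n → Ω → ℝ) (hm : ∀ i, Measurable (Y i))
    (hdist : ∀ i, Measure.map (Y i) ℙ = gaussianReal μ v)
    (hind : iIndepFun Y ℙ) :
    ∫ ω, ((∑ i, Real.exp (Y i ω)) / n) / ((n : ℝ) / ∑ i, (Real.exp (Y i ω))⁻¹) - 1 ∂ℙ =
      ((n : ℝ) - 1) / n * (Real.exp (v : ℝ) - 1) :=
  lognormal_Kn_mean_general n hn μ v Y hdist hind
end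

section
/- Let X₁, ..., Xₙ (n ≥ 2) be i.i.d. lognormal with parameters μ and σ², and let k = exp(σ²) - 1. The estimator k̂ₙ := (n/(n-1))·((Aₙ/Hₙ) - 1), with Aₙ and Hₙ the sample arithmetic and harmonic means, is unbiased: E[k̂ₙ] = k. -/
/-!
Since `Aₙ / Hₙ = (∑ Xᵢ)(∑ Xⱼ⁻¹) / n²`, expanding the product gives `n` diagonal terms equal to `1`
and `n (n - 1)` off-diagonal terms with expectation `E[X] E[X⁻¹]` by independence. For a lognormal
variable `E[X] E[X⁻¹] = e^(μ + σ²/2) e^(-μ + σ²/2) = e^(σ²)`, so `E[Aₙ / Hₙ] = (1 + (n - 1) e^(σ²)) / n`,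
and the factor `n / (n - 1)` turns `E[Aₙ / Hₙ] - 1` into exactly `e^(σ²) - 1`.
-/

open MeasureTheory ProbabilityTheory Real NNReal

section InvMoments

variable {Ω ι : Type*} {m : MeasurableSpace Ω} {P : Measure Ω} [IsProbabilityMeasure P]
  {X : ι → Ω → ℝ} {a b : ℝ}

lemma integrable_mul_inv_of_pairwise_indepFun (hindep : Pairwise fun i j ↦ X i ⟂ᵢ[P] X j)
    (hX0 : ∀ i ω, X i ω ≠ 0) (hint : ∀ i, Integrable (X i) P)
    (hint_inv : ∀ i, Integrable (fun ω ↦ (X i ω)⁻¹) P) (i j : ι) :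
    Integrable (fun ω ↦ X i ω * (X j ω)⁻¹) P := by
  obtain rfl | hij := eq_or_ne i j
  · simp only [mul_inv_cancel₀ (hX0 i _)]
    exact integrable_const 1
  · exact ((hindep hij).comp measurable_id measurable_inv).integrable_mul (hint i) (hint_inv j)

lemma integral_mul_inv_of_pairwise_indepFun [DecidableEq ι]
    (hindep : Pairwise fun i j ↦ X i ⟂ᵢ[P] X j)
    (hX0 : ∀ i ω, X i ω ≠ 0) (hint : ∀ i, Integrable (X i) P)
    (hint_inv : ∀ i, Integrable (fun ω ↦ (X i ω)⁻¹) P)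
    (ha : ∀ i, ∫ ω, X i ω ∂P = a) (hb : ∀ i, ∫ ω, (X i ω)⁻¹ ∂P = b) (i j : ι) :
    ∫ ω, X i ω * (X j ω)⁻¹ ∂P = if i = j then 1 else a * b := by
  obtain rfl | hij := eq_or_ne i j
  · simp [mul_inv_cancel₀ (hX0 i _)]
  · rw [if_neg hij, ← ha i, ← hb j]
    exact ((hindep hij).comp measurable_id measurable_inv).integral_fun_mul_eq_mul_integral
      (hint i).aestronglyMeasurable (hint_inv j).aestronglyMeasurable

lemma integral_sum_mul_sum_inv_of_pairwise_indepFun [Fintype ι] [DecidableEq ι]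
    (hindep : Pairwise fun i j ↦ X i ⟂ᵢ[P] X j)
    (hX0 : ∀ i ω, X i ω ≠ 0) (hint : ∀ i, Integrable (X i) P)
    (hint_inv : ∀ i, Integrable (fun ω ↦ (X i ω)⁻¹) P)
    (ha : ∀ i, ∫ ω, X i ω ∂P = a) (hb : ∀ i, ∫ ω, (X i ω)⁻¹ ∂P = b) :
    ∫ ω, (∑ i, X i ω) * ∑ j, (X j ω)⁻¹ ∂P =
      Fintype.card ι + Fintype.card ι * (Fintype.card ι - 1) * (a * b) := by
  have hint_mul := integrable_mul_inv_of_pairwise_indepFun hindep hX0 hint hint_inv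
  simp_rw [Finset.sum_mul_sum]
  rw [integral_finsetSum _ fun i _ ↦ integrable_finsetSum _ fun j _ ↦ hint_mul i j]
  simp_rw [integral_finsetSum _ fun j _ ↦ hint_mul _ j,
    integral_mul_inv_of_pairwise_indepFun hindep hX0 hint hint_inv ha hb]
  have hsplit (i j : ι) :
      (if i = j then (1 : ℝ) else a * b) = a * b + if i = j then 1 - a * b else 0 := by
    split_ifs <;> ring
  simp only [hsplit, Finset.sum_add_distrib, Finset.sum_ite_eq, Finset.mem_univ, if_true,
    Finset.sum_const, Finset.card_univ, nsmul_eq_mul]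
  ring

end InvMoments

lemma integral_khat_of_pairwise_indepFun {Ω : Type*} {m : MeasurableSpace Ω} {P : Measure Ω}
    [IsProbabilityMeasure P] {n : ℕ} (hn : 2 ≤ n) {X : Fin n → Ω → ℝ} {a b : ℝ}
    (hindep : Pairwise fun i j ↦ X i ⟂ᵢ[P] X j)
    (hX0 : ∀ i ω, X i ω ≠ 0) (hint : ∀ i, Integrable (X i) P)
    (hint_inv : ∀ i, Integrable (fun ω ↦ (X i ω)⁻¹) P)
    (ha : ∀ i, ∫ ω, X i ω ∂P = a) (hb : ∀ i, ∫ ω, (X i ω)⁻¹ ∂P = b) :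
    ∫ ω, (n : ℝ) / ((n : ℝ) - 1) *
        (((∑ i, X i ω) / n) / ((n : ℝ) / ∑ i, (X i ω)⁻¹) - 1) ∂P = a * b - 1 := by
  have hn0 : (n : ℝ) ≠ 0 := by positivity
  have hn1 : (n : ℝ) - 1 ≠ 0 := by
    have : (2 : ℝ) ≤ n := by exact_mod_cast hn
    linarith
  have hAH (ω : Ω) : (n : ℝ) / ((n : ℝ) - 1) *
        (((∑ i, X i ω) / n) / ((n : ℝ) / ∑ i, (X i ω)⁻¹) - 1) =
      n / (n - 1) / n ^ 2 * ((∑ i, X i ω) * ∑ i, (X i ω)⁻¹) - n / (n - 1) := by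
    rw [div_div_eq_mul_div]
    ring
  have hint_prod : Integrable (fun ω ↦ (∑ i, X i ω) * ∑ j, (X j ω)⁻¹) P := by
    simp_rw [Finset.sum_mul_sum]
    exact integrable_finsetSum _ fun i _ ↦ integrable_finsetSum _ fun j _ ↦
      integrable_mul_inv_of_pairwise_indepFun hindep hX0 hint hint_inv i j
  simp_rw [hAH]
  rw [integral_sub (hint_prod.const_mul _) (integrable_const _), integral_const_mul,
    integral_sum_mul_sum_inv_of_pairwise_indepFun hindep hX0 hint hint_inv ha hb]
  simp only [Fintype.card_fin, integral_const, probReal_univ, one_smul]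
  field_simp
  ring

lemma integrable_exp_mul_of_map_eq_gaussianReal {Ω : Type*} {m : MeasurableSpace Ω}
    {P : Measure Ω} [IsProbabilityMeasure P] {Y : Ω → ℝ} {μ : ℝ} {v : ℝ≥0}
    (hY : P.map Y = gaussianReal μ v) (t : ℝ) :
    Integrable (fun ω ↦ rexp (t * Y ω)) P := by
  rw [← mgf_pos_iff, mgf_gaussianReal hY]
  exact exp_pos _

theorem lognormal_khat_unbiased_general {Ω : Type*} [MeasureSpace Ω]
    [IsProbabilityMeasure (ℙ : Measure Ω)]
    (n : ℕ) (hn : 2 ≤ n) (μ : ℝ) (v : ℝ≥0)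
    (Y : Fin n → Ω → ℝ)
    (hdist : ∀ i, Measure.map (Y i) ℙ = gaussianReal μ v)
    (hind : iIndepFun Y ℙ) :
    ∫ ω, (n : ℝ) / ((n : ℝ) - 1) *
        (((∑ i, Real.exp (Y i ω)) / n) / ((n : ℝ) / ∑ i, (Real.exp (Y i ω))⁻¹) - 1) ∂ℙ =
      Real.exp (v : ℝ) - 1 := by
  have hexp_inv (i : Fin n) : (fun ω ↦ (rexp (Y i ω))⁻¹) = fun ω ↦ rexp (-1 * Y i ω) := by
    simp [exp_neg]
  have hmean (i : Fin n) : ∫ ω, rexp (Y i ω) = rexp (μ + v / 2) := by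
    simpa [mgf] using mgf_gaussianReal (hdist i) 1
  have hmean_inv (i : Fin n) : ∫ ω, (rexp (Y i ω))⁻¹ = rexp (-μ + v / 2) := by
    rw [hexp_inv, ← mgf, mgf_gaussianReal (hdist i)]
    ring_nf
  rw [integral_khat_of_pairwise_indepFun (X := fun i ω ↦ rexp (Y i ω)) hn
    (fun i j hij ↦ (hind.indepFun hij).comp measurable_exp measurable_exp)
    (fun i ω ↦ (exp_pos _).ne')
    (fun i ↦ by simpa using integrable_exp_mul_of_map_eq_gaussianReal (hdist i) 1)
    (fun i ↦ hexp_inv i ▸ integrable_exp_mul_of_map_eq_gaussianReal (hdist i) (-1))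
    hmean hmean_inv, ← exp_add]
  ring_nf

/-- Let `X i = exp (Y i)`, `i = 1, ..., n`, `n ≥ 2`, be i.i.d. lognormal with
parameters `μ, σ²`, and `k = exp σ² - 1`. The estimator
`k̂ₙ = (n/(n-1))·(Aₙ/Hₙ - 1)` is unbiased: `E[k̂ₙ] = k`. -/
theorem lognormal_khat_unbiased {Ω : Type*} [MeasureSpace Ω]
    [IsProbabilityMeasure (ℙ : Measure Ω)]
    (n : ℕ) (hn : 2 ≤ n) (μ : ℝ) (v : ℝ≥0) (hv : v ≠ 0)
    (Y : Fin n → Ω → ℝ) (hm : ∀ i, Measurable (Y i))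
    (hdist : ∀ i, Measure.map (Y i) ℙ = gaussianReal μ v)
    (hind : iIndepFun Y ℙ) :
    ∫ ω, (n : ℝ) / ((n : ℝ) - 1) *
        (((∑ i, Real.exp (Y i ω)) / n) / ((n : ℝ) / ∑ i, (Real.exp (Y i ω))⁻¹) - 1) ∂ℙ =
      Real.exp (v : ℝ) - 1 :=
  lognormal_khat_unbiased_general n hn μ v Y hdist hind
end

section
/- Let X₁, ..., Xₙ (n ≥ 4) be i.i.d. lognormal with parameters μ and σ², k = exp(σ²) - 1, and Kₙ = (1/n²)(∑ᵢXᵢ)(∑ⱼ1/Xⱼ) - 1. Then Var(Kₙ) = (2(n-1)/n²)·k²·(1 + k + k²/(2n)). -/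
/-!
Write `P = (∑ᵢ exp Yᵢ)(∑ⱼ exp (-Yⱼ)) = ∑ₖₗ exp ⟨eₖ - eₗ, Y⟩`, so that `Kₙ = P / n² - 1` and
`Var Kₙ = Var P / n⁴`. For i.i.d. `N(μ, v)` coordinates, `E exp ⟨c, Y⟩ = exp Λ(c)` with
`Λ(c) = ∑ᵢ (μ cᵢ + v cᵢ² / 2)`, and polarisation `Λ(c + d) = Λ(c) + Λ(d) + v ⟨c, d⟩` gives the
tilted moment `E [exp ⟨c, Y⟩ P] = exp Λ(c) · (ω A(c) A(-c) - (ω - 1) n)`, where `ω = exp v` and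
`A(c) = ∑ₖ ω ^ cₖ`. The choice `c = 0` gives `E P`; writing `P² = ∑ₖₗ exp ⟨eₖ - eₗ, Y⟩ P` and
choosing `c = eₖ - eₗ` gives `E P²`, because `A(±(eₖ - eₗ)) = n - 2 + ω + ω⁻¹` when `k ≠ l`.
-/

open MeasureTheory ProbabilityTheory Real NNReal Finset

section Algebra

variable {ι : Type*} [Fintype ι]

noncomputable def gaussianCGF (μ v : ℝ) (c : ι → ℝ) : ℝ := ∑ i, (μ * c i + v * c i ^ 2 / 2)

lemma gaussianCGF_add (μ v : ℝ) (c d : ι → ℝ) :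
    gaussianCGF μ v (c + d) = gaussianCGF μ v c + gaussianCGF μ v d + v * ∑ i, c i * d i := by
  simp only [gaussianCGF, Pi.add_apply, mul_sum, ← sum_add_distrib]
  exact sum_congr rfl fun i _ => by ring

lemma sum_comp_single_sub_single [DecidableEq ι] {k l : ι} (hkl : k ≠ l) (f : ℝ → ℝ) :
    ∑ i, f ((Pi.single k 1 - Pi.single l 1 : ι → ℝ) i) =
      f 1 + f (-1) + (Fintype.card ι - 2) * f 0 := by
  have h : ∑ i, (f ((Pi.single k 1 - Pi.single l 1 : ι → ℝ) i) - f 0) =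
      (f 1 - f 0) + (f (-1) - f 0) := by
    rw [Fintype.sum_eq_add k l hkl]
    · simp [hkl, hkl.symm]
    · rintro i ⟨hik, hil⟩
      simp [hik, hil]
  rw [sum_sub_distrib, sum_const, card_univ, nsmul_eq_mul] at h
  linarith

lemma gaussianCGF_single_sub_single [DecidableEq ι] (μ v : ℝ) (k l : ι) :
    gaussianCGF μ v (Pi.single k 1 - Pi.single l 1) = if k = l then 0 else v := by
  split_ifs with hkl
  · simp [hkl, gaussianCGF]
  · exact (sum_comp_single_sub_single hkl fun t => μ * t + v * t ^ 2 / 2).trans (by ring)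

lemma sum_mul_single_sub_single [DecidableEq ι] (c : ι → ℝ) (k l : ι) :
    ∑ i, c i * (Pi.single k 1 - Pi.single l 1 : ι → ℝ) i = c k - c l := by
  simp [mul_sub, sum_sub_distrib, Pi.single_apply]

lemma sum_sum_exp_gaussianCGF_add_single_sub_single [DecidableEq ι] (μ v : ℝ) (c : ι → ℝ) :
    ∑ k, ∑ l, exp (gaussianCGF μ v (c + (Pi.single k 1 - Pi.single l 1))) =
      exp (gaussianCGF μ v c) * (exp v * (∑ k, exp (v * c k)) * ∑ l, exp (-(v * c l))
        - (exp v - 1) * Fintype.card ι) := by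
  have hterm : ∀ k l, exp (gaussianCGF μ v (c + (Pi.single k 1 - Pi.single l 1))) =
      exp (gaussianCGF μ v c) * (exp v * (exp (v * c k) * exp (-(v * c l)))
        - if k = l then exp v - 1 else 0) := by
    intro k l
    rw [gaussianCGF_add, gaussianCGF_single_sub_single, sum_mul_single_sub_single]
    split_ifs with hkl
    · subst hkl
      rw [← exp_add]
      simp
    · rw [sub_zero, ← exp_add, ← exp_add, ← exp_add]
      ring_nf
  simp only [hterm, ← mul_sum, sum_sub_distrib, sum_ite_eq, mem_univ, if_true, sum_const,
    card_univ, nsmul_eq_mul, ← sum_mul]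
  ring

lemma sum_sum_ite_eq_const {R : Type*} [CommRing R] [DecidableEq ι] (a b : R) :
    ∑ k : ι, ∑ l : ι, (if k = l then a else b) =
      Fintype.card ι * a + Fintype.card ι * (Fintype.card ι - 1) * b := by
  have h : ∀ k l : ι, (if k = l then a else b) = (if k = l then a - b else 0) + b := by
    intro k l
    split_ifs <;> ring
  simp only [h, sum_add_distrib, sum_ite_eq, mem_univ, if_true, sum_const, card_univ,
    nsmul_eq_mul]
  ring

noncomputable def ratioSum (y : ι → ℝ) : ℝ := (∑ i, exp (y i)) * ∑ j, (exp (y j))⁻¹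

lemma exp_sum_mul_mul_ratioSum [DecidableEq ι] (c y : ι → ℝ) :
    exp (∑ i, c i * y i) * ratioSum y =
      ∑ k, ∑ l, exp (∑ i, (c + (Pi.single k 1 - Pi.single l 1) : ι → ℝ) i * y i) := by
  rw [ratioSum, sum_mul_sum, mul_sum]
  refine sum_congr rfl fun k _ => ?_
  rw [mul_sum]
  refine sum_congr rfl fun l _ => ?_
  simp only [Pi.add_apply, Pi.sub_apply, add_mul, sub_mul, sum_add_distrib, sum_sub_distrib,
    Pi.single_apply, ite_mul, one_mul, zero_mul, sum_ite_eq', mem_univ, if_true, exp_add,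
    exp_sub, div_eq_mul_inv]

lemma ratioSum_eq_sum_sum_exp [DecidableEq ι] (y : ι → ℝ) :
    ratioSum y = ∑ k, ∑ l, exp (∑ i, (Pi.single k 1 - Pi.single l 1 : ι → ℝ) i * y i) := by
  simpa using exp_sum_mul_mul_ratioSum 0 y

lemma ratioSum_sq_eq_sum_sum_exp_mul [DecidableEq ι] (y : ι → ℝ) :
    ratioSum y ^ 2 =
      ∑ k, ∑ l, exp (∑ i, (Pi.single k 1 - Pi.single l 1 : ι → ℝ) i * y i) * ratioSum y := by
  rw [sq]
  nth_rewrite 1 [ratioSum_eq_sum_sum_exp]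
  simp only [sum_mul]

end Algebra

namespace ProbabilityTheory.iIndepFun

variable {Ω ι : Type*} [MeasurableSpace Ω] [Fintype ι] {p : Measure Ω} {μ : ℝ} {v : ℝ≥0}
  {Y : ι → Ω → ℝ}

lemma integrable_exp_sum_mul_of_gaussianReal (hind : iIndepFun Y p)
    (hm : ∀ i, Measurable (Y i)) (hdist : ∀ i, p.map (Y i) = gaussianReal μ v) (c : ι → ℝ) :
    Integrable (fun ω => exp (∑ i, c i * Y i ω)) p := by
  have := hind.isProbabilityMeasure
  have hcY := hind.comp (fun i y => c i * y) fun i => measurable_const_mul (c i)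
  simpa using hcY.integrable_exp_mul_sum (t := 1) (s := univ) (fun i => (hm i).const_mul (c i))
    fun i _ => by simpa using mgf_pos_iff.mp ((mgf_gaussianReal (hdist i) (c i)).symm ▸ exp_pos _)

lemma integral_exp_sum_mul_of_gaussianReal (hind : iIndepFun Y p)
    (hm : ∀ i, Measurable (Y i)) (hdist : ∀ i, p.map (Y i) = gaussianReal μ v) (c : ι → ℝ) :
    ∫ ω, exp (∑ i, c i * Y i ω) ∂p = exp (gaussianCGF μ v c) := by
  have hcY := hind.comp (fun i y => c i * y) fun i => measurable_const_mul (c i)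
  have h := hcY.mgf_sum (t := 1) (fun i => (hm i).const_mul (c i)) univ
  simp only [Function.comp_def, mgf_const_mul, mul_one, mgf_gaussianReal (hdist _)] at h
  rw [gaussianCGF, exp_sum, ← h, mgf]
  simp [Finset.sum_apply]

lemma integrable_exp_sum_mul_mul_ratioSum (hind : iIndepFun Y p)
    (hm : ∀ i, Measurable (Y i)) (hdist : ∀ i, p.map (Y i) = gaussianReal μ v) (c : ι → ℝ) :
    Integrable (fun ω => exp (∑ i, c i * Y i ω) * ratioSum (Y · ω)) p := by
  classical
  simp only [exp_sum_mul_mul_ratioSum]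
  exact integrable_finsetSum _ fun k _ => integrable_finsetSum _ fun l _ =>
    hind.integrable_exp_sum_mul_of_gaussianReal hm hdist _

lemma integral_exp_sum_mul_mul_ratioSum (hind : iIndepFun Y p)
    (hm : ∀ i, Measurable (Y i)) (hdist : ∀ i, p.map (Y i) = gaussianReal μ v) (c : ι → ℝ) :
    ∫ ω, exp (∑ i, c i * Y i ω) * ratioSum (Y · ω) ∂p =
      exp (gaussianCGF μ v c) * (exp v * (∑ k, exp (v * c k)) * ∑ l, exp (-(v * c l))
        - (exp v - 1) * Fintype.card ι) := by
  classical
  have hint := hind.integrable_exp_sum_mul_of_gaussianReal hm hdist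
  simp only [exp_sum_mul_mul_ratioSum]
  rw [integral_finsetSum _ fun k _ => integrable_finsetSum _ fun l _ => hint _,
    ← sum_sum_exp_gaussianCGF_add_single_sub_single]
  refine sum_congr rfl fun k _ => ?_
  rw [integral_finsetSum _ fun l _ => hint _]
  exact sum_congr rfl fun l _ => hind.integral_exp_sum_mul_of_gaussianReal hm hdist _

lemma integral_ratioSum (hind : iIndepFun Y p)
    (hm : ∀ i, Measurable (Y i)) (hdist : ∀ i, p.map (Y i) = gaussianReal μ v) :
    ∫ ω, ratioSum (Y · ω) ∂p =
      exp v * Fintype.card ι ^ 2 - (exp v - 1) * Fintype.card ι := by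
  simpa [gaussianCGF, sq, mul_assoc] using hind.integral_exp_sum_mul_mul_ratioSum hm hdist 0

lemma integral_ratioSum_sq (hind : iIndepFun Y p)
    (hm : ∀ i, Measurable (Y i)) (hdist : ∀ i, p.map (Y i) = gaussianReal μ v) :
    ∫ ω, ratioSum (Y · ω) ^ 2 ∂p =
      Fintype.card ι * (exp v * Fintype.card ι ^ 2 - (exp v - 1) * Fintype.card ι) +
        Fintype.card ι * (Fintype.card ι - 1) * (exp v * (exp v *
          (Fintype.card ι - 2 + exp v + (exp v)⁻¹) ^ 2 - (exp v - 1) * Fintype.card ι)) := by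
  classical
  have hint := hind.integrable_exp_sum_mul_mul_ratioSum hm hdist
  simp only [ratioSum_sq_eq_sum_sum_exp_mul]
  rw [integral_finsetSum _ fun k _ => integrable_finsetSum _ fun l _ => hint _,
    ← sum_sum_ite_eq_const]
  refine sum_congr rfl fun k _ => ?_
  rw [integral_finsetSum _ fun l _ => hint _]
  refine sum_congr rfl fun l _ => ?_
  rw [hind.integral_exp_sum_mul_mul_ratioSum hm hdist]
  split_ifs with hkl
  · simp [hkl, gaussianCGF, sq, mul_assoc]
  · rw [gaussianCGF_single_sub_single, if_neg hkl,
      sum_comp_single_sub_single hkl fun t => exp (v * t),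
      sum_comp_single_sub_single hkl fun t => exp (-(v * t))]
    simp [exp_neg]
    ring

lemma memLp_two_ratioSum (hind : iIndepFun Y p)
    (hm : ∀ i, Measurable (Y i)) (hdist : ∀ i, p.map (Y i) = gaussianReal μ v) :
    MemLp (fun ω => ratioSum (Y · ω)) 2 p := by
  classical
  have hmeas : Measurable fun ω => ratioSum (Y · ω) := by
    unfold ratioSum
    fun_prop
  refine (memLp_two_iff_integrable_sq hmeas.aestronglyMeasurable).mpr ?_
  simp only [ratioSum_sq_eq_sum_sum_exp_mul]
  exact integrable_finsetSum _ fun k _ => integrable_finsetSum _ fun l _ =>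
    hind.integrable_exp_sum_mul_mul_ratioSum hm hdist _

lemma variance_ratioSum (hind : iIndepFun Y p)
    (hm : ∀ i, Measurable (Y i)) (hdist : ∀ i, p.map (Y i) = gaussianReal μ v) :
    variance (fun ω => ratioSum (Y · ω)) p =
      Fintype.card ι * (Fintype.card ι - 1) * (exp v - 1) ^ 2 *
        ((exp v - 1) ^ 2 + 2 * Fintype.card ι * (exp v - 1) + 2 * Fintype.card ι) := by
  have := hind.isProbabilityMeasure
  rw [variance_eq_sub (hind.memLp_two_ratioSum hm hdist)]
  simp only [Pi.pow_apply]
  rw [hind.integral_ratioSum_sq hm hdist, hind.integral_ratioSum hm hdist]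
  field_simp
  ring

end ProbabilityTheory.iIndepFun

theorem lognormal_Kn_variance_general {Ω : Type*} [MeasureSpace Ω]
    [IsProbabilityMeasure (ℙ : Measure Ω)]
    (n : ℕ) (μ : ℝ) (v : ℝ≥0)
    (Y : Fin n → Ω → ℝ) (hm : ∀ i, Measurable (Y i))
    (hdist : ∀ i, Measure.map (Y i) ℙ = gaussianReal μ v)
    (hind : iIndepFun Y ℙ) :
    (∫ ω, (1 / (n : ℝ) ^ 2 * ((∑ i, Real.exp (Y i ω)) *
        ∑ j, (Real.exp (Y j ω))⁻¹) - 1) ^ 2 ∂ℙ) -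
      (∫ ω, 1 / (n : ℝ) ^ 2 * ((∑ i, Real.exp (Y i ω)) *
        ∑ j, (Real.exp (Y j ω))⁻¹) - 1 ∂ℙ) ^ 2 =
      2 * ((n : ℝ) - 1) / (n : ℝ) ^ 2 * (Real.exp (v : ℝ) - 1) ^ 2 *
        (1 + (Real.exp (v : ℝ) - 1) + (Real.exp (v : ℝ) - 1) ^ 2 / (2 * n)) := by
  have hP := hind.memLp_two_ratioSum hm hdist
  calc _ = variance (fun ω => 1 / (n : ℝ) ^ 2 * ratioSum (Y · ω) - 1) ℙ :=
        (variance_eq_sub (X := fun ω => 1 / (n : ℝ) ^ 2 * ratioSum (Y · ω) - 1)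
          ((hP.const_mul _).sub (memLp_const 1))).symm
    _ = (1 / (n : ℝ) ^ 2) ^ 2 * variance (fun ω => ratioSum (Y · ω)) ℙ := by
        rw [variance_sub_const (hP.const_mul _).aestronglyMeasurable, variance_const_mul]
    _ = _ := by
        rw [hind.variance_ratioSum hm hdist, Fintype.card_fin]
        rcases eq_or_ne (n : ℝ) 0 with hn | hn
        · simp [hn]
        · field_simp
          ring

/-- Let `X i = exp (Y i)`, `i = 1, ..., n`, `n ≥ 4`, be i.i.d. lognormal with
parameters `μ, σ²`, `k = exp σ² - 1`, and
`Kₙ = (1/n²)(∑ᵢ Xᵢ)(∑ⱼ 1/Xⱼ) - 1`. Then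
`Var(Kₙ) = (2(n-1)/n²)·k²·(1 + k + k²/(2n))`. -/
theorem lognormal_Kn_variance {Ω : Type*} [MeasureSpace Ω]
    [IsProbabilityMeasure (ℙ : Measure Ω)]
    (n : ℕ) (hn : 4 ≤ n) (μ : ℝ) (v : ℝ≥0) (hv : v ≠ 0)
    (Y : Fin n → Ω → ℝ) (hm : ∀ i, Measurable (Y i))
    (hdist : ∀ i, Measure.map (Y i) ℙ = gaussianReal μ v)
    (hind : iIndepFun Y ℙ) :
    (∫ ω, (1 / (n : ℝ) ^ 2 * ((∑ i, Real.exp (Y i ω)) *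
        ∑ j, (Real.exp (Y j ω))⁻¹) - 1) ^ 2 ∂ℙ) -
      (∫ ω, 1 / (n : ℝ) ^ 2 * ((∑ i, Real.exp (Y i ω)) *
        ∑ j, (Real.exp (Y j ω))⁻¹) - 1 ∂ℙ) ^ 2 =
      2 * ((n : ℝ) - 1) / (n : ℝ) ^ 2 * (Real.exp (v : ℝ) - 1) ^ 2 *
        (1 + (Real.exp (v : ℝ) - 1) + (Real.exp (v : ℝ) - 1) ^ 2 / (2 * n)) :=
  lognormal_Kn_variance_general n μ v Y hm hdist hind
end
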